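/- Let W be a Morse sequence on K. Then the image Ō[p] of the extension map ∧̃_p equals the set of p-chains fixed by the stabilized flow Φ̄, and the image Ō̲[p] of the coextension map ∨̃_p equals the set of p-chains fixed by the stabilized coflow Φ̲: Ō[p] = {c ∈ K[p] : Φ̄(c) = c} and Ō̲[p] = {c ∈ K[p] : Φ̲(c) = c}. -/
import Mathlib


/-! ## Basic notions: simplicial complexes, collapses, expansions, fillings -/

variable {V : Type*} [DecidableEq V]

/-- A (finite) simplicial complex: a finite collection of nonempty finite sets that is
closed under taking nonempty subsets. -/
def IsComplex (K : Finset (Finset V)) : Prop :=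
  ∀ τ ∈ K, τ.Nonempty ∧ ∀ σ, σ ⊆ τ → σ.Nonempty → σ ∈ K

/-- `ν` is a facet (inclusion-maximal face) of `K`. -/
def IsFacet (K : Finset (Finset V)) (ν : Finset V) : Prop :=
  ν ∈ K ∧ ∀ ρ ∈ K, ν ⊆ ρ → ρ = ν

/-- `(σ, τ)` is a free pair for `K`: `σ ⊊ τ` and `τ` is the only face of `K`
strictly containing `σ`. -/
def IsFreePair (K : Finset (Finset V)) (σ τ : Finset V) : Prop :=
  σ ∈ K ∧ τ ∈ K ∧ σ ⊂ τ ∧ ∀ ρ ∈ K, σ ⊂ ρ → ρ = τ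

/-- `K` is an elementary expansion of `L` (equivalently, `L` is an elementary collapse
of `K`): `L = K \ {σ, τ}` for some free pair `(σ, τ)` of `K`. -/
def ElemExpansion (L K : Finset (Finset V)) : Prop :=
  ∃ σ τ, IsFreePair K σ τ ∧ L = K \ {σ, τ}

/-- `K` is an elementary filling of `L` (equivalently, `L` is an elementary perforation
of `K`): `L = K \ {ν}` for some facet `ν` of `K`. -/
def ElemFilling (L K : Finset (Finset V)) : Prop :=
  ∃ ν, IsFacet K ν ∧ L = K \ {ν}

/-- `L` is an elementary collapse of `K`. -/
def ElemCollapse (K L : Finset (Finset V)) : Prop :=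
  ∃ σ τ, IsFreePair K σ τ ∧ L = K \ {σ, τ}

/-- `K` collapses onto `L`: there is a sequence of elementary collapses from `K` to `L`. -/
def CollapsesOnto (K L : Finset (Finset V)) : Prop :=
  Relation.ReflTransGen ElemCollapse K L

/-! ## Morse sequences -/

/-- A Morse sequence `⟨∅ = K₀, …, K_k = K⟩`: each `K_i` is a simplicial complex that is
an elementary expansion or an elementary filling of `K_{i-1}`. -/
structure MorseSeq (V : Type*) [DecidableEq V] where
  k : ℕ
  seq : ℕ → Finset (Finset V)
  cpx : ∀ i ≤ k, IsComplex (seq i)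
  init : seq 0 = ∅
  step : ∀ i, 1 ≤ i → i ≤ k → ElemExpansion (seq (i - 1)) (seq i) ∨ ElemFilling (seq (i - 1)) (seq i)

/-- The simplicial complex `K = K_k` on which the Morse sequence lives. -/
def MorseSeq.cplx (W : MorseSeq V) : Finset (Finset V) := W.seq W.k

/-- A face added by a filling step: a critical face of `W`. -/
def MorseSeq.Critical (W : MorseSeq V) (ν : Finset V) : Prop :=
  ∃ i, 1 ≤ i ∧ i ≤ W.k ∧ W.seq i \ W.seq (i - 1) = {ν}

/-- `(σ, τ)` is a regular pair for `W`: the two faces are added together by an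
elementary expansion step. -/
def MorseSeq.Regular (W : MorseSeq V) (σ τ : Finset V) : Prop :=
  ∃ i, 1 ≤ i ∧ i ≤ W.k ∧ σ ⊂ τ ∧ W.seq i \ W.seq (i - 1) = {σ, τ}

/-- `σ` is lower regular for `W`. -/
def MorseSeq.LowerRegular (W : MorseSeq V) (σ : Finset V) : Prop := ∃ τ, W.Regular σ τ

/-- `τ` is upper regular for `W`. -/
def MorseSeq.UpperRegular (W : MorseSeq V) (τ : Finset V) : Prop := ∃ σ, W.Regular σ τ

/-! ## Chains modulo 2 -/

/-- The boundary `∂(σ)` of a simplex: the chain of its (nonempty) codimension-one faces. -/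
def bd (σ : Finset V) : Finset (Finset V) :=
  σ.powerset.filter fun ρ => ρ.Nonempty ∧ ρ.card + 1 = σ.card

/-- The coboundary `δ(σ)` of a simplex in `K`: the chain of faces of `K` of
codimension one over `σ` containing `σ`. -/
def cobd (K : Finset (Finset V)) (σ : Finset V) : Finset (Finset V) :=
  K.filter fun τ => σ ⊆ τ ∧ σ.card + 1 = τ.card

/-- Mod-2 linear extension: `chainSum c f` is the sum (symmetric difference) of
the chains `f σ` over `σ ∈ c`; an element belongs to it iff it belongs to an odd
number of the `f σ`. -/
def chainSum (c : Finset (Finset V)) (f : Finset V → Finset (Finset V)) : Finset (Finset V) :=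
  (c.biUnion f).filter fun ν => (c.filter fun σ => ν ∈ f σ).card % 2 = 1

/-- `c` is a `p`-chain of `K`: a set of `p`-simplices of `K`. -/
def IsChainOf (K : Finset (Finset V)) (p : ℕ) (c : Finset (Finset V)) : Prop :=
  ∀ ν ∈ c, ν ∈ K ∧ ν.card = p + 1

/-- `c` is a chain of critical `p`-simplices of `W` (an element of `Ŵ[p]`). -/
def IsCritChain (W : MorseSeq V) (p : ℕ) (c : Finset (Finset V)) : Prop :=
  ∀ ν ∈ c, W.Critical ν ∧ ν.card = p + 1

/-! ## Frames, reference and coreference maps -/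

/-- A frame on `W`: it assigns to each `p`-simplex of `K` a chain of critical
`p`-simplices of `W`. -/
def IsFrame (W : MorseSeq V) (Υ : Finset V → Finset (Finset V)) : Prop :=
  ∀ ν ∈ W.cplx, ∀ μ ∈ Υ ν, W.Critical μ ∧ μ.card = ν.card

/-- `Λ` is the reference map of `W`: a frame with `Λ(ν) = ν` for critical `ν`, and
`Λ(τ) = 0`, `Λ(∂τ) = 0` for upper regular `τ`. -/
def IsRefMap (W : MorseSeq V) (Λ : Finset V → Finset (Finset V)) : Prop :=
  IsFrame W Λ ∧ (∀ ν, W.Critical ν → Λ ν = {ν}) ∧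
    ∀ τ, W.UpperRegular τ → Λ τ = ∅ ∧ chainSum (bd τ) Λ = ∅

/-- `Λ` is the coreference map of `W`: a frame with `Λ(ν) = ν` for critical `ν`, and
`Λ(σ) = 0`, `Λ(δσ) = 0` for lower regular `σ`. -/
def IsCorefMap (W : MorseSeq V) (Λ : Finset V → Finset (Finset V)) : Prop :=
  IsFrame W Λ ∧ (∀ ν, W.Critical ν → Λ ν = {ν}) ∧
    ∀ σ, W.LowerRegular σ → Λ σ = ∅ ∧ chainSum (cobd W.cplx σ) Λ = ∅

/-- The extension map `∧̃` of `W` (defined from the coreference map `Vee`):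
`∧̃(κ) = {ν ∈ K | κ ∈ ∨(ν)}`. -/
def extMap (W : MorseSeq V) (Vee : Finset V → Finset (Finset V)) (κ : Finset V) :
    Finset (Finset V) :=
  W.cplx.filter fun ν => κ ∈ Vee ν

/-- The coextension map `∨̃` of `W` (defined from the reference map `Λ`):
`∨̃(κ) = {ν ∈ K | κ ∈ ∧(ν)}`. -/
def coextMap (W : MorseSeq V) (Λ : Finset V → Finset (Finset V)) (κ : Finset V) :
    Finset (Finset V) :=
  W.cplx.filter fun ν => κ ∈ Λ ν

/-! ## The gradient flow and coflow -/

open Classical in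
/-- The discrete vector field of `W` on simplices: `Vf W σ = {τ}` if `(σ,τ)` is a regular
pair for `W`, and `Vf W ν = 0` if `ν` is critical or upper regular. -/
noncomputable def Vf (W : MorseSeq V) (σ : Finset V) : Finset (Finset V) :=
  W.cplx.filter fun τ => W.Regular σ τ

open Classical in
/-- The dual discrete vector field of `W` on simplices: `Vfs W τ = {σ}` if `(σ,τ)` is a
regular pair for `W`, and `Vfs W ν = 0` if `ν` is critical or lower regular. -/
noncomputable def Vfs (W : MorseSeq V) (τ : Finset V) : Finset (Finset V) :=
  W.cplx.filter fun σ => W.Regular σ τ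

/-- The gradient flow on a simplex: `Φ(ν) = ν + ∂(V(ν)) + V(∂(ν))`. -/
noncomputable def PhiSimp (W : MorseSeq V) (ν : Finset V) : Finset (Finset V) :=
  symmDiff {ν} (symmDiff (chainSum (Vf W ν) bd) (chainSum (bd ν) (Vf W)))

/-- The gradient flow `Φ` of `W`, extended linearly to chains. -/
noncomputable def Phi (W : MorseSeq V) (c : Finset (Finset V)) : Finset (Finset V) :=
  chainSum c (PhiSimp W)

/-- The gradient coflow on a simplex: `Φ*(ν) = ν + δ(V*(ν)) + V*(δ(ν))`. -/
noncomputable def PhiStarSimp (W : MorseSeq V) (ν : Finset V) : Finset (Finset V) :=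
  symmDiff {ν} (symmDiff (chainSum (Vfs W ν) (cobd W.cplx)) (chainSum (cobd W.cplx ν) (Vfs W)))

/-- The gradient coflow `Φ*` of `W`, extended linearly to chains. -/
noncomputable def PhiStar (W : MorseSeq V) (c : Finset (Finset V)) : Finset (Finset V) :=
  chainSum c (PhiStarSimp W)

/-! ## Auxiliary: mod-2 coefficients -/

open Finset

/-- Coefficient of a simplex in a chain, in `ZMod 2`. -/
noncomputable def coef (c : Finset (Finset V)) (ν : Finset V) : ZMod 2 :=
  if ν ∈ c then 1 else 0

lemma coef_eq_one {c : Finset (Finset V)} {ν : Finset V} (h : ν ∈ c) : coef c ν = 1 := if_pos h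

lemma coef_eq_zero {c : Finset (Finset V)} {ν : Finset V} (h : ν ∉ c) : coef c ν = 0 := if_neg h

lemma chain_ext {a b : Finset (Finset V)} (h : ∀ ν, coef a ν = coef b ν) : a = b := by
  ext ν
  have := h ν
  unfold coef at this
  by_cases ha : ν ∈ a <;> by_cases hb : ν ∈ b
  · simp [ha, hb]
  · exfalso; rw [if_pos ha, if_neg hb] at this; exact one_ne_zero this
  · exfalso; rw [if_neg ha, if_pos hb] at this; exact one_ne_zero this.symm
  · simp [ha, hb]

omit [DecidableEq V] in
lemma sum_boole_card {s : Finset (Finset V)} {P : Finset V → Prop} [DecidablePred P] :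
    (∑ x ∈ s, (if P x then (1 : ZMod 2) else 0)) = ((s.filter P).card : ZMod 2) := by
  simp [Finset.sum_boole]

lemma natCast_zmod2_eq_one_iff (n : ℕ) : ((n : ZMod 2) = 1) ↔ n % 2 = 1 := by
  constructor
  · intro h
    rcases Nat.mod_two_eq_zero_or_one n with h0 | h1
    · exfalso
      have : (n : ZMod 2) = 0 := by
        have := (ZMod.natCast_eq_zero_iff n 2).2 (Nat.dvd_of_mod_eq_zero h0)
        exact this
      rw [this] at h
      exact zero_ne_one h
    · exact h1
  · intro h
    have : ((n % 2 : ℕ) : ZMod 2) = (n : ZMod 2) := ZMod.natCast_mod n 2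
    rw [← this, h]
    norm_num

lemma mem_chainSum_iff {c : Finset (Finset V)} {f : Finset V → Finset (Finset V)}
    {ν : Finset V} : ν ∈ chainSum c f ↔ (c.filter fun σ => ν ∈ f σ).card % 2 = 1 := by
  unfold chainSum
  simp only [mem_filter, mem_biUnion]
  constructor
  · rintro ⟨_, h⟩; exact h
  · intro h
    refine ⟨?_, h⟩
    have : (c.filter fun σ => ν ∈ f σ).Nonempty := by
      rw [← Finset.card_pos]
      omega
    obtain ⟨σ, hσ⟩ := this
    rw [mem_filter] at hσ
    exact ⟨σ, hσ.1, hσ.2⟩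

lemma coef_chainSum (c : Finset (Finset V)) (f : Finset V → Finset (Finset V)) (ν : Finset V) :
    coef (chainSum c f) ν = ∑ σ ∈ c, coef (f σ) ν := by
  classical
  unfold coef
  rw [sum_boole_card]
  by_cases h : ν ∈ chainSum c f
  · rw [if_pos h]
    rw [mem_chainSum_iff] at h
    exact ((natCast_zmod2_eq_one_iff _).2 h).symm
  · rw [if_neg h]
    rw [mem_chainSum_iff] at h
    have h0 : (c.filter fun σ => ν ∈ f σ).card % 2 = 0 := by omega
    rw [← ZMod.natCast_mod, h0]
    norm_num

lemma sum_coef {c U : Finset (Finset V)} (h : c ⊆ U) (g : Finset V → ZMod 2) :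
    ∑ x ∈ c, g x = ∑ x ∈ U, coef c x * g x := by
  classical
  rw [← Finset.sum_filter_add_sum_filter_not U (· ∈ c)]
  have h1 : U.filter (· ∈ c) = c := by
    ext x; simp only [mem_filter]
    exact ⟨fun h => h.2, fun hx => ⟨h hx, hx⟩⟩
  rw [h1]
  have h2 : ∑ x ∈ U.filter (· ∉ c), coef c x * g x = 0 := by
    apply Finset.sum_eq_zero
    intro x hx
    rw [mem_filter] at hx
    rw [coef_eq_zero hx.2, zero_mul]
  rw [h2, add_zero]
  apply Finset.sum_congr rfl
  intro x hx
  rw [coef_eq_one hx, one_mul]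

lemma sum_chainSum (c : Finset (Finset V)) (f : Finset V → Finset (Finset V))
    (g : Finset V → ZMod 2) :
    ∑ x ∈ chainSum c f, g x = ∑ σ ∈ c, ∑ x ∈ f σ, g x := by
  classical
  have hsub : chainSum c f ⊆ c.biUnion f := Finset.filter_subset _ _
  rw [sum_coef hsub]
  have : ∀ x ∈ c.biUnion f, coef (chainSum c f) x * g x = ∑ σ ∈ c, coef (f σ) x * g x := by
    intro x _
    rw [coef_chainSum, Finset.sum_mul]
  rw [Finset.sum_congr rfl this, Finset.sum_comm]
  apply Finset.sum_congr rfl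
  intro σ hσ
  exact (sum_coef (fun x hx => Finset.mem_biUnion.2 ⟨σ, hσ, hx⟩) g).symm

lemma coef_symmDiff (a b : Finset (Finset V)) (ν : Finset V) :
    coef (symmDiff a b) ν = coef a ν + coef b ν := by
  unfold coef
  by_cases ha : ν ∈ a <;> by_cases hb : ν ∈ b <;>
    simp [Finset.mem_symmDiff, ha, hb]
  exact (CharTwo.add_self_eq_zero 1).symm

lemma coef_singleton (x ν : Finset V) : coef {x} ν = if ν = x then 1 else 0 := by
  unfold coef; simp

lemma symmDiff_eq_right_of_empty {a b : Finset (Finset V)} (h : symmDiff a b = ∅) : a = b := by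
  have := symmDiff_eq_bot.1 h
  exact this

/-! ## Step structure of a Morse sequence -/

namespace MorseSeq

variable (W : MorseSeq V)

lemma seq_subset_succ {i : ℕ} (h1 : 1 ≤ i) (hk : i ≤ W.k) : W.seq (i - 1) ⊆ W.seq i := by
  rcases W.step i h1 hk with ⟨σ, τ, _, hL⟩ | ⟨ν, _, hL⟩ <;>
    · rw [hL]; exact Finset.sdiff_subset

lemma seq_mono {i j : ℕ} (hij : i ≤ j) (hk : j ≤ W.k) : W.seq i ⊆ W.seq j := by
  induction j with
  | zero => simp_all
  | succ n ih =>
    rcases Nat.eq_or_lt_of_le hij with h | h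
    · rw [h]
    · have h1 : W.seq n ⊆ W.seq (n + 1) := by
        have := W.seq_subset_succ (i := n + 1) (by omega) hk
        simpa using this
      exact (ih (by omega) (by omega)).trans h1

/-- The step at which a face of `K` appears. -/
noncomputable def stp (ν : Finset V) : ℕ := sInf {i | ν ∈ W.seq i}

variable {W}

lemma stp_spec {ν : Finset V} (hν : ν ∈ W.cplx) : ν ∈ W.seq (W.stp ν) := by
  have : W.k ∈ {i | ν ∈ W.seq i} := hν
  exact Nat.sInf_mem ⟨W.k, this⟩

lemma stp_le {ν : Finset V} {j : ℕ} (hj : ν ∈ W.seq j) : W.stp ν ≤ j :=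
  Nat.sInf_le hj

lemma stp_le_k {ν : Finset V} (hν : ν ∈ W.cplx) : W.stp ν ≤ W.k := stp_le hν

lemma stp_pos {ν : Finset V} (hν : ν ∈ W.cplx) : 1 ≤ W.stp ν := by
  by_contra h
  have h0 : W.stp ν = 0 := by omega
  have := stp_spec hν
  rw [h0, W.init] at this
  exact absurd this (Finset.notMem_empty ν)

lemma notMem_seq_pred {ν : Finset V} (hν : ν ∈ W.cplx) : ν ∉ W.seq (W.stp ν - 1) := by
  intro h
  have := stp_le h
  have := stp_pos hν
  omega

lemma mem_diff_stp {ν : Finset V} (hν : ν ∈ W.cplx) :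
    ν ∈ W.seq (W.stp ν) \ W.seq (W.stp ν - 1) :=
  Finset.mem_sdiff.2 ⟨stp_spec hν, notMem_seq_pred hν⟩

/-- If `ν` lies in the difference set at step `i`, then `i` is its step. -/
lemma stp_eq_of_mem_diff {ν : Finset V} {i : ℕ} (h1 : 1 ≤ i) (hk : i ≤ W.k)
    (h : ν ∈ W.seq i \ W.seq (i - 1)) : W.stp ν = i := by
  rw [Finset.mem_sdiff] at h
  have hle : W.stp ν ≤ i := stp_le h.1
  by_contra hne
  have hlt : W.stp ν ≤ i - 1 := by omega
  have hmem : ν ∈ W.seq (W.stp ν) := stp_spec (W.seq_mono (by omega) le_rfl h.1)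
  exact h.2 (W.seq_mono hlt (by omega) hmem)

/-- Faces of a face of `seq j` are in `seq j`. -/
lemma mem_seq_of_subset {σ τ : Finset V} {j : ℕ} (hj : j ≤ W.k) (hτ : τ ∈ W.seq j)
    (hσ : σ ⊆ τ) (hne : σ.Nonempty) : σ ∈ W.seq j :=
  ((W.cpx j hj τ hτ).2 σ hσ hne)

lemma stp_mono {σ τ : Finset V} (hτ : τ ∈ W.cplx) (hσ : σ ⊆ τ) (hne : σ.Nonempty) :
    W.stp σ ≤ W.stp τ :=
  stp_le (mem_seq_of_subset (stp_le_k hτ) (stp_spec hτ) hσ hne)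

lemma nonempty_of_mem {ν : Finset V} {j : ℕ} (hj : j ≤ W.k) (hν : ν ∈ W.seq j) :
    ν.Nonempty := (W.cpx j hj ν hν).1

end MorseSeq

/-! ## Classification of faces -/

namespace MorseSeq

variable {W : MorseSeq V}

lemma diff_eq_of_removed {A S : Finset (Finset V)} (hS : S ⊆ A) : A \ (A \ S) = S := by
  rw [Finset.sdiff_sdiff_self_left]
  exact Finset.inter_eq_right.2 hS

/-- A regular pair comes from an expansion step, as a free pair. -/
lemma Regular.free_pair {σ τ : Finset V} (h : W.Regular σ τ) :
    ∃ i, 1 ≤ i ∧ i ≤ W.k ∧ W.seq i \ W.seq (i - 1) = {σ, τ} ∧ σ ⊂ τ ∧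
      IsFreePair (W.seq i) σ τ := by
  obtain ⟨i, h1, hk, hst, hdiff⟩ := h
  refine ⟨i, h1, hk, hdiff, hst, ?_⟩
  have hne : σ ≠ τ := hst.ne
  rcases W.step i h1 hk with ⟨σ', τ', hfp, hL⟩ | ⟨ν, hf, hL⟩
  · have hd : W.seq i \ W.seq (i - 1) = {σ', τ'} := by
      rw [hL, diff_eq_of_removed]
      intro x hx
      rcases Finset.mem_insert.1 hx with rfl | hx
      · exact hfp.1
      · rw [Finset.mem_singleton] at hx; subst hx; exact hfp.2.1
    rw [hdiff] at hd
    have hσm : σ ∈ ({σ', τ'} : Finset (Finset V)) := by rw [← hd]; simp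
    have hτm : τ ∈ ({σ', τ'} : Finset (Finset V)) := by rw [← hd]; simp
    simp only [Finset.mem_insert, Finset.mem_singleton] at hσm hτm
    have hst' := hfp.2.2.1
    have : σ = σ' ∧ τ = τ' := by
      rcases hσm with rfl | rfl
      · rcases hτm with rfl | rfl
        · exact absurd rfl hne
        · exact ⟨rfl, rfl⟩
      · rcases hτm with rfl | rfl
        · exact absurd (hst.trans hst') (ssubset_irrefl σ)
        · exact absurd rfl hne
    rcases this with ⟨rfl, rfl⟩
    exact hfp
  · exfalso
    have hd : W.seq i \ W.seq (i - 1) ⊆ {ν} := by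
      rw [hL]
      intro x hx
      rw [Finset.mem_sdiff, Finset.mem_sdiff, Finset.mem_singleton] at hx
      by_contra hc
      exact hx.2 ⟨hx.1, fun h => hc (Finset.mem_singleton.2 h)⟩
    rw [hdiff] at hd
    have h1' : σ ∈ ({ν} : Finset (Finset V)) := hd (by simp)
    have h2' : τ ∈ ({ν} : Finset (Finset V)) := hd (by simp)
    simp only [Finset.mem_singleton] at h1' h2'
    exact hne (h1'.trans h2'.symm)

/-- A regular pair has codimension one. -/
lemma Regular.card {σ τ : Finset V} (h : W.Regular σ τ) : σ.card + 1 = τ.card := by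
  obtain ⟨i, h1, hk, hdiff, hst, hfp⟩ := h.free_pair
  obtain ⟨hσK, hτK, hss, hmax⟩ := hfp
  obtain ⟨x, hxτ, hxσ⟩ := Finset.exists_of_ssubset hss
  have hρ : insert x σ ∈ W.seq i := by
    apply mem_seq_of_subset hk hτK
    · intro y hy
      rcases Finset.mem_insert.1 hy with rfl | hy
      · exact hxτ
      · exact hss.subset hy
    · exact Finset.insert_nonempty x σ
  have hρτ : insert x σ = τ := hmax _ hρ (Finset.ssubset_insert hxσ)
  have : (insert x σ).card = σ.card + 1 := Finset.card_insert_of_notMem hxσ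
  rw [hρτ] at this
  omega

lemma Regular.ssubset {σ τ : Finset V} (h : W.Regular σ τ) : σ ⊂ τ := by
  obtain ⟨i, _, _, hst, _⟩ := h
  exact hst

lemma Regular.mem_left {σ τ : Finset V} (h : W.Regular σ τ) : σ ∈ W.cplx := by
  obtain ⟨i, h1, hk, hdiff, hst, hfp⟩ := h.free_pair
  exact W.seq_mono hk le_rfl hfp.1

lemma Regular.mem_right {σ τ : Finset V} (h : W.Regular σ τ) : τ ∈ W.cplx := by
  obtain ⟨i, h1, hk, hdiff, hst, hfp⟩ := h.free_pair
  exact W.seq_mono hk le_rfl hfp.2.1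

/-- The step of each member of a regular pair is the step of the pair. -/
lemma Regular.stp_eq {σ τ : Finset V} (h : W.Regular σ τ) :
    ∃ i, 1 ≤ i ∧ i ≤ W.k ∧ W.seq i \ W.seq (i - 1) = {σ, τ} ∧
      W.stp σ = i ∧ W.stp τ = i := by
  obtain ⟨i, h1, hk, hdiff, hst, hfp⟩ := h.free_pair
  refine ⟨i, h1, hk, hdiff, ?_, ?_⟩
  · exact stp_eq_of_mem_diff h1 hk (by rw [hdiff]; simp)
  · exact stp_eq_of_mem_diff h1 hk (by rw [hdiff]; simp)

lemma Regular.stp_left_eq_right {σ τ : Finset V} (h : W.Regular σ τ) :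
    W.stp σ = W.stp τ := by
  obtain ⟨i, _, _, _, h1, h2⟩ := h.stp_eq
  rw [h1, h2]

lemma Critical.stp_eq {ν : Finset V} (h : W.Critical ν) :
    ∃ i, 1 ≤ i ∧ i ≤ W.k ∧ W.seq i \ W.seq (i - 1) = {ν} ∧ W.stp ν = i := by
  obtain ⟨i, h1, hk, hdiff⟩ := h
  exact ⟨i, h1, hk, hdiff, stp_eq_of_mem_diff h1 hk (by rw [hdiff]; simp)⟩

lemma Critical.mem {ν : Finset V} (h : W.Critical ν) : ν ∈ W.cplx := by
  obtain ⟨i, h1, hk, hdiff, _⟩ := h.stp_eq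
  have : ν ∈ W.seq i \ W.seq (i - 1) := by rw [hdiff]; simp
  exact W.seq_mono hk le_rfl (Finset.mem_sdiff.1 this).1

/-- Not both critical and lower regular. -/
lemma not_crit_and_lower {ν : Finset V} (hc : W.Critical ν) (hl : W.LowerRegular ν) : False := by
  obtain ⟨τ, hr⟩ := hl
  obtain ⟨i, _, _, hd1, hs1⟩ := hc.stp_eq
  obtain ⟨j, _, _, hd2, hs2, _⟩ := hr.stp_eq
  have : i = j := by rw [← hs1, ← hs2]
  subst this
  rw [hd1] at hd2
  have hτ : τ ∈ ({ν} : Finset (Finset V)) := by rw [hd2]; simp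
  simp only [Finset.mem_singleton] at hτ
  exact hr.ssubset.ne hτ.symm

lemma not_crit_and_upper {ν : Finset V} (hc : W.Critical ν) (hu : W.UpperRegular ν) : False := by
  obtain ⟨σ, hr⟩ := hu
  obtain ⟨i, _, _, hd1, hs1⟩ := hc.stp_eq
  obtain ⟨j, _, _, hd2, _, hs2⟩ := hr.stp_eq
  have : i = j := by rw [← hs1, ← hs2]
  subst this
  rw [hd1] at hd2
  have hσ : σ ∈ ({ν} : Finset (Finset V)) := by rw [hd2]; simp
  simp only [Finset.mem_singleton] at hσ
  exact hr.ssubset.ne hσ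

lemma not_lower_and_upper {ν : Finset V} (hl : W.LowerRegular ν) (hu : W.UpperRegular ν) :
    False := by
  obtain ⟨τ, hr1⟩ := hl
  obtain ⟨σ, hr2⟩ := hu
  obtain ⟨i, _, _, hd1, hs1, _⟩ := hr1.stp_eq
  obtain ⟨j, _, _, hd2, _, hs2⟩ := hr2.stp_eq
  have : i = j := by rw [← hs1, ← hs2]
  subst this
  rw [hd1] at hd2
  have hτ : τ ∈ ({σ, ν} : Finset (Finset V)) := by rw [← hd2]; simp
  simp only [Finset.mem_insert, Finset.mem_singleton] at hτ
  rcases hτ with rfl | rfl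
  · exact (hr2.ssubset.trans hr1.ssubset).ne rfl
  · exact hr1.ssubset.ne rfl

/-- Trichotomy: every face of `K` is critical, lower regular, or upper regular. -/
lemma crit_or_lower_or_upper {ν : Finset V} (hν : ν ∈ W.cplx) :
    W.Critical ν ∨ W.LowerRegular ν ∨ W.UpperRegular ν := by
  set i := W.stp ν with hi
  have h1 : 1 ≤ i := stp_pos hν
  have hk : i ≤ W.k := stp_le_k hν
  have hmem : ν ∈ W.seq i \ W.seq (i - 1) := mem_diff_stp hν
  rcases W.step i h1 hk with ⟨σ, τ, hfp, hL⟩ | ⟨μ, hf, hL⟩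
  · have hd : W.seq i \ W.seq (i - 1) = {σ, τ} := by
      rw [hL, diff_eq_of_removed]
      intro x hx
      rcases Finset.mem_insert.1 hx with rfl | hx
      · exact hfp.1
      · rw [Finset.mem_singleton] at hx; subst hx; exact hfp.2.1
    rw [hd] at hmem
    simp only [Finset.mem_insert, Finset.mem_singleton] at hmem
    rcases hmem with rfl | rfl
    · exact Or.inr (Or.inl ⟨τ, i, h1, hk, hfp.2.2.1, hd⟩)
    · exact Or.inr (Or.inr ⟨σ, i, h1, hk, hfp.2.2.1, hd⟩)
  · have hd : W.seq i \ W.seq (i - 1) = {μ} := by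
      rw [hL, diff_eq_of_removed]
      intro x hx
      rw [Finset.mem_singleton] at hx; subst hx; exact hf.1
    rw [hd] at hmem
    simp only [Finset.mem_singleton] at hmem
    subst hmem
    exact Or.inl ⟨i, h1, hk, hd⟩

/-- Uniqueness of the upper partner. -/
lemma Regular.unique_right {σ τ τ' : Finset V} (h : W.Regular σ τ) (h' : W.Regular σ τ') :
    τ = τ' := by
  obtain ⟨i, _, _, hd1, hs1, _⟩ := h.stp_eq
  obtain ⟨j, _, _, hd2, hs2, _⟩ := h'.stp_eq
  have : i = j := by rw [← hs1, ← hs2]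
  subst this
  rw [hd1] at hd2
  have hτ' : τ' ∈ ({σ, τ} : Finset (Finset V)) := by rw [hd2]; simp
  simp only [Finset.mem_insert, Finset.mem_singleton] at hτ'
  rcases hτ' with rfl | rfl
  · exact absurd rfl h'.ssubset.ne
  · rfl

/-- Uniqueness of the lower partner. -/
lemma Regular.unique_left {σ σ' τ : Finset V} (h : W.Regular σ τ) (h' : W.Regular σ' τ) :
    σ = σ' := by
  obtain ⟨i, _, _, hd1, _, hs1⟩ := h.stp_eq
  obtain ⟨j, _, _, hd2, _, hs2⟩ := h'.stp_eq
  have : i = j := by rw [← hs1, ← hs2]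
  subst this
  rw [hd1] at hd2
  have hσ' : σ' ∈ ({σ, τ} : Finset (Finset V)) := by rw [hd2]; simp
  simp only [Finset.mem_insert, Finset.mem_singleton] at hσ'
  rcases hσ' with rfl | rfl
  · rfl
  · exact absurd rfl h'.ssubset.ne

end MorseSeq

/-! ## Vector field and (co)boundary membership lemmas -/

namespace MorseSeq

variable {W : MorseSeq V}

lemma mem_Vf {σ ν : Finset V} : ν ∈ Vf W σ ↔ W.Regular σ ν := by
  classical
  unfold Vf
  rw [Finset.mem_filter]
  exact ⟨fun h => h.2, fun h => ⟨h.mem_right, h⟩⟩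

lemma mem_Vfs {τ ν : Finset V} : ν ∈ Vfs W τ ↔ W.Regular ν τ := by
  unfold Vfs
  simp only [Finset.mem_filter]
  exact ⟨fun h => h.2, fun h => ⟨h.mem_left, h⟩⟩

lemma Vf_eq_empty {σ : Finset V} (h : ¬ W.LowerRegular σ) : Vf W σ = ∅ := by
  ext ν
  simp only [Finset.notMem_empty, iff_false, mem_Vf]
  exact fun hr => h ⟨ν, hr⟩

lemma Vfs_eq_empty {τ : Finset V} (h : ¬ W.UpperRegular τ) : Vfs W τ = ∅ := by
  ext ν
  simp only [Finset.notMem_empty, iff_false, mem_Vfs]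
  exact fun hr => h ⟨ν, hr⟩

lemma mem_bd_iff {ρ σ : Finset V} : ρ ∈ bd σ ↔ ρ ⊆ σ ∧ ρ.Nonempty ∧ ρ.card + 1 = σ.card := by
  unfold bd
  rw [Finset.mem_filter, Finset.mem_powerset]

lemma mem_cobd_iff {K : Finset (Finset V)} {σ τ : Finset V} :
    τ ∈ cobd K σ ↔ τ ∈ K ∧ σ ⊆ τ ∧ σ.card + 1 = τ.card := by
  unfold cobd
  rw [Finset.mem_filter]

lemma nonempty_of_mem_cplx {ν : Finset V} (h : ν ∈ W.cplx) : ν.Nonempty :=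
  (W.cpx W.k le_rfl ν h).1

lemma Regular.mem_bd {σ τ : Finset V} (h : W.Regular σ τ) : σ ∈ bd τ :=
  mem_bd_iff.2 ⟨h.ssubset.subset, nonempty_of_mem_cplx h.mem_left, h.card⟩

lemma Regular.mem_cobd {σ τ : Finset V} (h : W.Regular σ τ) : τ ∈ cobd W.cplx σ :=
  mem_cobd_iff.2 ⟨h.mem_right, h.ssubset.subset, h.card⟩

lemma bd_subset_cplx {τ : Finset V} (h : τ ∈ W.cplx) : bd τ ⊆ W.cplx := by
  intro ρ hρ
  rw [mem_bd_iff] at hρ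
  exact (W.cpx W.k le_rfl τ h).2 ρ hρ.1 hρ.2.1

lemma mem_bd_iff_mem_cobd {s x : Finset V} (hx : x ∈ W.cplx) (hs : s ∈ W.cplx) :
    s ∈ bd x ↔ x ∈ cobd W.cplx s := by
  rw [mem_bd_iff, mem_cobd_iff]
  have := nonempty_of_mem_cplx hs
  tauto

/-! ## Coefficient formula for the flows -/

lemma coef_Phi (c : Finset (Finset V)) (ν : Finset V) :
    coef (Phi W c) ν = ∑ x ∈ c, coef (PhiSimp W x) ν :=
  coef_chainSum c (PhiSimp W) ν

lemma coef_PhiSimp (x ν : Finset V) :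
    coef (PhiSimp W x) ν = (if ν = x then 1 else 0) +
      (∑ t ∈ Vf W x, coef (bd t) ν) + (∑ s ∈ bd x, coef (Vf W s) ν) := by
  unfold PhiSimp
  rw [coef_symmDiff, coef_symmDiff, coef_chainSum, coef_chainSum, coef_singleton, add_assoc]

lemma coef_PhiStar (c : Finset (Finset V)) (ν : Finset V) :
    coef (PhiStar W c) ν = ∑ x ∈ c, coef (PhiStarSimp W x) ν :=
  coef_chainSum c (PhiStarSimp W) ν

lemma coef_PhiStarSimp (x ν : Finset V) :
    coef (PhiStarSimp W x) ν = (if ν = x then 1 else 0) +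
      (∑ t ∈ Vfs W x, coef (cobd W.cplx t) ν) + (∑ s ∈ cobd W.cplx x, coef (Vfs W s) ν) := by
  unfold PhiStarSimp
  rw [coef_symmDiff, coef_symmDiff, coef_chainSum, coef_chainSum, coef_singleton, add_assoc]

end MorseSeq

/-! ## Invariance of the image of the extension map -/

namespace MorseSeq

variable {W : MorseSeq V}

lemma chainSum_empty_left (f : Finset V → Finset (Finset V)) :
    chainSum (∅ : Finset (Finset V)) f = ∅ := by
  unfold chainSum
  simp

lemma coef_empty (ν : Finset V) : coef (∅ : Finset (Finset V)) ν = 0 :=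
  coef_eq_zero (Finset.notMem_empty ν)

lemma ext_fixed {Vee : Finset V → Finset (Finset V)} (hV : IsCorefMap W Vee) (κ : Finset V) :
    Phi W (extMap W Vee κ) = extMap W Vee κ := by
  classical
  apply chain_ext
  intro ν
  set c := extMap W Vee κ with hc
  have hcmem : ∀ x ∈ c, x ∈ W.cplx ∧ κ ∈ Vee x := by
    intro x hx
    rw [hc] at hx
    exact Finset.mem_filter.1 hx
  rw [coef_Phi]
  have hsplit : ∀ x ∈ c, coef (PhiSimp W x) ν = (if ν = x then 1 else 0) +
      (∑ t ∈ Vf W x, coef (bd t) ν) + (∑ s ∈ bd x, coef (Vf W s) ν) :=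
    fun x _ => coef_PhiSimp x ν
  rw [Finset.sum_congr rfl hsplit, Finset.sum_add_distrib, Finset.sum_add_distrib]
  have hT1 : ∑ x ∈ c, (if ν = x then (1 : ZMod 2) else 0) = coef c ν := by
    rw [Finset.sum_ite_eq]
    unfold coef
    rfl
  have hT2 : ∑ x ∈ c, (∑ t ∈ Vf W x, coef (bd t) ν) = 0 := by
    apply Finset.sum_eq_zero
    intro x hx
    obtain ⟨hxK, hκ⟩ := hcmem x hx
    have hnl : ¬ W.LowerRegular x := by
      intro hl
      have := (hV.2.2 x hl).1
      rw [this] at hκ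
      exact Finset.notMem_empty κ hκ
    rw [Vf_eq_empty hnl, Finset.sum_empty]
  have hT3 : ∑ x ∈ c, (∑ s ∈ bd x, coef (Vf W s) ν) = 0 := by
    by_cases hup : W.UpperRegular ν
    · obtain ⟨σν, hr⟩ := hup
      have hcoef : ∀ s, coef (Vf W s) ν = if s = σν then 1 else 0 := by
        intro s
        by_cases h : s = σν
        · subst h
          rw [if_pos rfl, coef_eq_one (mem_Vf.2 hr)]
        · rw [if_neg h, coef_eq_zero]
          intro hm
          exact h (hr.unique_left (mem_Vf.1 hm)).symm
      have hinner : ∀ x ∈ c, (∑ s ∈ bd x, coef (Vf W s) ν) =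
          if σν ∈ bd x then (1 : ZMod 2) else 0 := by
        intro x _
        simp_rw [hcoef]
        rw [Finset.sum_ite_eq' (bd x) σν (fun _ => (1 : ZMod 2))]
      rw [Finset.sum_congr rfl hinner]
      have hlow : W.LowerRegular σν := ⟨ν, hr⟩
      have hzero := (hV.2.2 σν hlow).2
      have h0 : (0 : ZMod 2) = ∑ x ∈ cobd W.cplx σν, coef (Vee x) κ := by
        rw [← coef_chainSum, hzero, coef_empty]
      have key : (∑ x ∈ c, if σν ∈ bd x then (1 : ZMod 2) else 0)
          = ∑ x ∈ cobd W.cplx σν, coef (Vee x) κ := by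
        rw [hc]
        unfold extMap cobd
        rw [Finset.sum_filter, Finset.sum_filter]
        apply Finset.sum_congr rfl
        intro x hxK
        have hνe : σν.Nonempty := nonempty_of_mem_cplx hr.mem_left
        have hbd : σν ∈ bd x ↔ (σν ⊆ x ∧ σν.card + 1 = x.card) := by
          rw [mem_bd_iff]
          tauto
        unfold coef
        by_cases h1 : κ ∈ Vee x <;> by_cases h2 : σν ⊆ x ∧ σν.card + 1 = x.card <;>
          simp [h1, h2, hbd]
      rw [key]
      exact h0.symm
    · apply Finset.sum_eq_zero
      intro x _
      apply Finset.sum_eq_zero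
      intro s _
      apply coef_eq_zero
      intro hm
      exact hup ⟨s, mem_Vf.1 hm⟩
  rw [hT1, hT2, hT3, add_zero, add_zero]

end MorseSeq

namespace MorseSeq

variable {W : MorseSeq V}

lemma coext_fixed {Λ : Finset V → Finset (Finset V)} (hΛ : IsRefMap W Λ) (κ : Finset V) :
    PhiStar W (coextMap W Λ κ) = coextMap W Λ κ := by
  classical
  apply chain_ext
  intro ν
  set c := coextMap W Λ κ with hc
  have hcmem : ∀ x ∈ c, x ∈ W.cplx ∧ κ ∈ Λ x := by
    intro x hx
    rw [hc] at hx
    exact Finset.mem_filter.1 hx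
  rw [coef_PhiStar]
  have hsplit : ∀ x ∈ c, coef (PhiStarSimp W x) ν = (if ν = x then 1 else 0) +
      (∑ t ∈ Vfs W x, coef (cobd W.cplx t) ν) + (∑ s ∈ cobd W.cplx x, coef (Vfs W s) ν) :=
    fun x _ => coef_PhiStarSimp x ν
  rw [Finset.sum_congr rfl hsplit, Finset.sum_add_distrib, Finset.sum_add_distrib]
  have hT1 : ∑ x ∈ c, (if ν = x then (1 : ZMod 2) else 0) = coef c ν := by
    rw [Finset.sum_ite_eq]
    unfold coef
    rfl
  have hT2 : ∑ x ∈ c, (∑ t ∈ Vfs W x, coef (cobd W.cplx t) ν) = 0 := by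
    apply Finset.sum_eq_zero
    intro x hx
    obtain ⟨hxK, hκ⟩ := hcmem x hx
    have hnu : ¬ W.UpperRegular x := by
      intro hu
      have := (hΛ.2.2 x hu).1
      rw [this] at hκ
      exact Finset.notMem_empty κ hκ
    rw [Vfs_eq_empty hnu, Finset.sum_empty]
  have hT3 : ∑ x ∈ c, (∑ s ∈ cobd W.cplx x, coef (Vfs W s) ν) = 0 := by
    by_cases hlo : W.LowerRegular ν
    · obtain ⟨τν, hr⟩ := hlo
      have hcoef : ∀ s, coef (Vfs W s) ν = if s = τν then 1 else 0 := by
        intro s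
        by_cases h : s = τν
        · subst h
          rw [if_pos rfl, coef_eq_one (mem_Vfs.2 hr)]
        · rw [if_neg h, coef_eq_zero]
          intro hm
          exact h (hr.unique_right (mem_Vfs.1 hm)).symm
      have hinner : ∀ x ∈ c, (∑ s ∈ cobd W.cplx x, coef (Vfs W s) ν) =
          if τν ∈ cobd W.cplx x then (1 : ZMod 2) else 0 := by
        intro x _
        simp_rw [hcoef]
        rw [Finset.sum_ite_eq' (cobd W.cplx x) τν (fun _ => (1 : ZMod 2))]
      rw [Finset.sum_congr rfl hinner]
      have hup : W.UpperRegular τν := ⟨ν, hr⟩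
      have hzero := (hΛ.2.2 τν hup).2
      have h0 : (0 : ZMod 2) = ∑ x ∈ bd τν, coef (Λ x) κ := by
        rw [← coef_chainSum, hzero, coef_empty]
      have hbdsub : bd τν ⊆ W.cplx := bd_subset_cplx hr.mem_right
      have key : (∑ x ∈ c, if τν ∈ cobd W.cplx x then (1 : ZMod 2) else 0)
          = ∑ x ∈ bd τν, coef (Λ x) κ := by
        have hfil : W.cplx.filter (fun x => x ∈ bd τν) = bd τν := by
          ext x
          rw [Finset.mem_filter]
          exact ⟨fun h => h.2, fun h => ⟨hbdsub h, h⟩⟩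
        rw [hc]
        unfold coextMap
        rw [Finset.sum_filter, ← hfil, Finset.sum_filter]
        apply Finset.sum_congr rfl
        intro x hxK
        have hiff : x ∈ bd τν ↔ τν ∈ cobd W.cplx x :=
          mem_bd_iff_mem_cobd hr.mem_right hxK
        unfold coef
        by_cases h1 : κ ∈ Λ x <;> by_cases h2 : x ∈ bd τν <;>
          simp [h1, h2, ← hiff]
      rw [key]
      exact h0.symm
    · apply Finset.sum_eq_zero
      intro x _
      apply Finset.sum_eq_zero
      intro s _
      apply coef_eq_zero
      intro hm
      exact hlo ⟨s, mem_Vfs.1 hm⟩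
  rw [hT1, hT2, hT3, add_zero, add_zero]

end MorseSeq

/-! ## Helpers for the vanishing argument -/

namespace MorseSeq

variable {W : MorseSeq V}

lemma Vf_eq_singleton {σ τ : Finset V} (h : W.Regular σ τ) : Vf W σ = {τ} := by
  ext μ
  rw [mem_Vf, Finset.mem_singleton]
  exact ⟨fun h' => (h.unique_right h').symm, fun h' => h' ▸ h⟩

lemma Vfs_eq_singleton {σ τ : Finset V} (h : W.Regular σ τ) : Vfs W τ = {σ} := by
  ext μ
  rw [mem_Vfs, Finset.mem_singleton]
  exact ⟨fun h' => (h.unique_left h').symm, fun h' => h' ▸ h⟩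

lemma notMem_bd_self (σ : Finset V) : σ ∉ bd σ := by
  rw [mem_bd_iff]
  rintro ⟨-, -, h⟩
  omega

lemma notMem_cobd_self (K : Finset (Finset V)) (σ : Finset V) : σ ∉ cobd K σ := by
  rw [mem_cobd_iff]
  rintro ⟨-, -, h⟩
  omega

lemma mem_pair_of_stp_eq {σ τ x : Finset V} (hr : W.Regular σ τ) (hx : x ∈ W.cplx)
    (hstp : W.stp x = W.stp σ) : x = σ ∨ x = τ := by
  obtain ⟨i, h1, hk, hd, hsσ, hsτ⟩ := hr.stp_eq
  have hmem := mem_diff_stp hx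
  rw [hstp, hsσ, hd] at hmem
  simpa using hmem

lemma flow_eq {e : Finset (Finset V)} (hfix : Phi W e = e) (μ : Finset V) :
    (∑ x ∈ e, ∑ t ∈ Vf W x, coef (bd t) μ) +
      (∑ x ∈ e, ∑ s ∈ bd x, coef (Vf W s) μ) = 0 := by
  have h := congrArg (fun c => coef c μ) hfix
  rw [coef_Phi] at h
  have hsplit : ∀ x ∈ e, coef (PhiSimp W x) μ = (if μ = x then 1 else 0) +
      (∑ t ∈ Vf W x, coef (bd t) μ) + (∑ s ∈ bd x, coef (Vf W s) μ) :=
    fun x _ => coef_PhiSimp x μ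
  rw [Finset.sum_congr rfl hsplit, Finset.sum_add_distrib, Finset.sum_add_distrib] at h
  have hT1 : ∑ x ∈ e, (if μ = x then (1 : ZMod 2) else 0) = coef e μ := by
    rw [Finset.sum_ite_eq]
    unfold coef
    rfl
  rw [hT1, add_assoc] at h
  have := add_left_cancel (h.trans (add_zero (coef e μ)).symm)
  exact this

lemma coflow_eq {e : Finset (Finset V)} (hfix : PhiStar W e = e) (μ : Finset V) :
    (∑ x ∈ e, ∑ t ∈ Vfs W x, coef (cobd W.cplx t) μ) +
      (∑ x ∈ e, ∑ s ∈ cobd W.cplx x, coef (Vfs W s) μ) = 0 := by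
  have h := congrArg (fun c => coef c μ) hfix
  rw [coef_PhiStar] at h
  have hsplit : ∀ x ∈ e, coef (PhiStarSimp W x) μ = (if μ = x then 1 else 0) +
      (∑ t ∈ Vfs W x, coef (cobd W.cplx t) μ) + (∑ s ∈ cobd W.cplx x, coef (Vfs W s) μ) :=
    fun x _ => coef_PhiStarSimp x μ
  rw [Finset.sum_congr rfl hsplit, Finset.sum_add_distrib, Finset.sum_add_distrib] at h
  have hT1 : ∑ x ∈ e, (if μ = x then (1 : ZMod 2) else 0) = coef e μ := by
    rw [Finset.sum_ite_eq]
    unfold coef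
    rfl
  rw [hT1, add_assoc] at h
  exact add_left_cancel (h.trans (add_zero (coef e μ)).symm)

end MorseSeq

namespace MorseSeq

variable {W : MorseSeq V}

/-- A flow-fixed chain with no critical simplices is zero. -/
lemma vanish {e : Finset (Finset V)} (heK : ∀ ν ∈ e, ν ∈ W.cplx)
    (hecrit : ∀ ν ∈ e, ¬ W.Critical ν) (hfix : Phi W e = e) : e = ∅ := by
  classical
  by_contra hne
  obtain ⟨ν₀, hν₀e, hmax⟩ :=
    Finset.exists_max_image e W.stp (Finset.nonempty_iff_ne_empty.2 hne)
  have hν₀K := heK ν₀ hν₀e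
  have hreg : ∃ σ τ, W.Regular σ τ ∧ (ν₀ = σ ∨ ν₀ = τ) := by
    rcases crit_or_lower_or_upper hν₀K with hcrit | ⟨τ', hr⟩ | ⟨σ', hr⟩
    · exact absurd hcrit (hecrit ν₀ hν₀e)
    · exact ⟨ν₀, τ', hr, Or.inl rfl⟩
    · exact ⟨σ', ν₀, hr, Or.inr rfl⟩
  obtain ⟨σ, τ, hr, hν₀⟩ := hreg
  have hstpστ : W.stp σ = W.stp τ := hr.stp_left_eq_right
  have hImax : ∀ x ∈ e, W.stp x ≤ W.stp σ := by
    intro x hx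
    rcases hν₀ with rfl | rfl
    · exact hmax x hx
    · rw [hstpστ]; exact hmax x hx
  have hσlow : W.LowerRegular σ := ⟨τ, hr⟩
  have hτup : W.UpperRegular τ := ⟨σ, hr⟩
  -- Step 1: σ ∉ e
  have hσe : σ ∉ e := by
    have h := flow_eq hfix σ
    have hB : (∑ x ∈ e, ∑ s ∈ bd x, coef (Vf W s) σ) = 0 := by
      apply Finset.sum_eq_zero; intro x _
      apply Finset.sum_eq_zero; intro s _
      apply coef_eq_zero
      intro hm
      exact not_lower_and_upper hσlow ⟨s, mem_Vf.1 hm⟩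
    have hA : (∑ x ∈ e, ∑ t ∈ Vf W x, coef (bd t) σ) =
        (if σ ∈ e then (1 : ZMod 2) else 0) := by
      have hpt : ∀ x ∈ e, (∑ t ∈ Vf W x, coef (bd t) σ) =
          if x = σ then (1 : ZMod 2) else 0 := by
        intro x hx
        by_cases hxσ : x = σ
        · subst hxσ
          rw [Vf_eq_singleton hr, Finset.sum_singleton, if_pos rfl, coef_eq_one hr.mem_bd]
        · rw [if_neg hxσ]
          by_cases hxl : W.LowerRegular x
          · obtain ⟨τx, hrx⟩ := hxl
            rw [Vf_eq_singleton hrx, Finset.sum_singleton]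
            apply coef_eq_zero
            intro hm
            rw [mem_bd_iff] at hm
            have h1 : W.stp σ ≤ W.stp τx := stp_mono hrx.mem_right hm.1 hm.2.1
            have h2 : W.stp τx = W.stp x := hrx.stp_left_eq_right.symm
            have h4 := hImax x hx
            have h3 : W.stp x = W.stp σ := by omega
            rcases mem_pair_of_stp_eq hr (heK x hx) h3 with rfl | rfl
            · exact hxσ rfl
            · exact not_lower_and_upper ⟨τx, hrx⟩ hτup
          · rw [Vf_eq_empty hxl, Finset.sum_empty]
      rw [Finset.sum_congr rfl hpt, Finset.sum_ite_eq' e σ (fun _ => (1 : ZMod 2))]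
    rw [hA, hB, add_zero] at h
    intro hmem
    rw [if_pos hmem] at h
    exact one_ne_zero h
  -- Step 2: τ ∉ e
  have hτe : τ ∉ e := by
    have h := flow_eq hfix τ
    have hA : (∑ x ∈ e, ∑ t ∈ Vf W x, coef (bd t) τ) = 0 := by
      apply Finset.sum_eq_zero; intro x hx
      by_cases hxl : W.LowerRegular x
      · obtain ⟨τx, hrx⟩ := hxl
        rw [Vf_eq_singleton hrx, Finset.sum_singleton]
        apply coef_eq_zero
        intro hm
        rw [mem_bd_iff] at hm
        have h1 : W.stp τ ≤ W.stp τx := stp_mono hrx.mem_right hm.1 hm.2.1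
        have h2 : W.stp τx = W.stp x := hrx.stp_left_eq_right.symm
        have h4 := hImax x hx
        have h3 : W.stp x = W.stp σ := by omega
        rcases mem_pair_of_stp_eq hr (heK x hx) h3 with rfl | rfl
        · have hEq : τ = τx := hr.unique_right hrx
          subst hEq
          have := hm.2.2
          omega
        · exact not_lower_and_upper ⟨τx, hrx⟩ hτup
      · rw [Vf_eq_empty hxl, Finset.sum_empty]
    have hB : (∑ x ∈ e, ∑ s ∈ bd x, coef (Vf W s) τ) =
        (if τ ∈ e then (1 : ZMod 2) else 0) := by
      have hcoef : ∀ s, coef (Vf W s) τ = if s = σ then (1 : ZMod 2) else 0 := by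
        intro s
        by_cases hs : s = σ
        · subst hs; rw [if_pos rfl, coef_eq_one (mem_Vf.2 hr)]
        · rw [if_neg hs]
          apply coef_eq_zero
          intro hm
          exact hs (hr.unique_left (mem_Vf.1 hm)).symm
      have hpt : ∀ x ∈ e, (∑ s ∈ bd x, coef (Vf W s) τ) =
          if x = τ then (1 : ZMod 2) else 0 := by
        intro x hx
        simp_rw [hcoef]
        rw [Finset.sum_ite_eq' (bd x) σ (fun _ => (1 : ZMod 2))]
        by_cases hxτ : x = τ
        · subst hxτ; rw [if_pos hr.mem_bd, if_pos rfl]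
        · rw [if_neg hxτ, if_neg]
          intro hm
          rw [mem_bd_iff] at hm
          have h1 : W.stp σ ≤ W.stp x := stp_mono (heK x hx) hm.1 hm.2.1
          have h4 := hImax x hx
          have h3 : W.stp x = W.stp σ := by omega
          rcases mem_pair_of_stp_eq hr (heK x hx) h3 with rfl | rfl
          · have := hm.2.2
            omega
          · exact hxτ rfl
      rw [Finset.sum_congr rfl hpt, Finset.sum_ite_eq' e τ (fun _ => (1 : ZMod 2))]
    rw [hA, hB, zero_add] at h
    intro hmem
    rw [if_pos hmem] at h
    exact one_ne_zero h
  rcases hν₀ with rfl | rfl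
  · exact hσe hν₀e
  · exact hτe hν₀e

end MorseSeq

namespace MorseSeq

variable {W : MorseSeq V}

/-- A coflow-fixed chain with no critical simplices is zero. -/
lemma vanish_star {e : Finset (Finset V)} (heK : ∀ ν ∈ e, ν ∈ W.cplx)
    (hecrit : ∀ ν ∈ e, ¬ W.Critical ν) (hfix : PhiStar W e = e) : e = ∅ := by
  classical
  by_contra hne
  obtain ⟨ν₀, hν₀e, hmin⟩ :=
    Finset.exists_min_image e W.stp (Finset.nonempty_iff_ne_empty.2 hne)
  have hν₀K := heK ν₀ hν₀e
  have hreg : ∃ σ τ, W.Regular σ τ ∧ (ν₀ = σ ∨ ν₀ = τ) := by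
    rcases crit_or_lower_or_upper hν₀K with hcrit | ⟨τ', hr⟩ | ⟨σ', hr⟩
    · exact absurd hcrit (hecrit ν₀ hν₀e)
    · exact ⟨ν₀, τ', hr, Or.inl rfl⟩
    · exact ⟨σ', ν₀, hr, Or.inr rfl⟩
  obtain ⟨σ, τ, hr, hν₀⟩ := hreg
  have hstpστ : W.stp σ = W.stp τ := hr.stp_left_eq_right
  have hImin : ∀ x ∈ e, W.stp σ ≤ W.stp x := by
    intro x hx
    rcases hν₀ with rfl | rfl
    · exact hmin x hx
    · rw [hstpστ]; exact hmin x hx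
  have hσlow : W.LowerRegular σ := ⟨τ, hr⟩
  have hτup : W.UpperRegular τ := ⟨σ, hr⟩
  -- Step 1: τ ∉ e
  have hτe : τ ∉ e := by
    have h := coflow_eq hfix τ
    have hB : (∑ x ∈ e, ∑ s ∈ cobd W.cplx x, coef (Vfs W s) τ) = 0 := by
      apply Finset.sum_eq_zero; intro x _
      apply Finset.sum_eq_zero; intro s _
      apply coef_eq_zero
      intro hm
      exact not_lower_and_upper ⟨s, mem_Vfs.1 hm⟩ hτup
    have hA : (∑ x ∈ e, ∑ t ∈ Vfs W x, coef (cobd W.cplx t) τ) =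
        (if τ ∈ e then (1 : ZMod 2) else 0) := by
      have hpt : ∀ x ∈ e, (∑ t ∈ Vfs W x, coef (cobd W.cplx t) τ) =
          if x = τ then (1 : ZMod 2) else 0 := by
        intro x hx
        by_cases hxτ : x = τ
        · subst hxτ
          rw [Vfs_eq_singleton hr, Finset.sum_singleton, if_pos rfl,
            coef_eq_one hr.mem_cobd]
        · rw [if_neg hxτ]
          by_cases hxu : W.UpperRegular x
          · obtain ⟨σx, hrx⟩ := hxu
            rw [Vfs_eq_singleton hrx, Finset.sum_singleton]
            apply coef_eq_zero
            intro hm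
            rw [mem_cobd_iff] at hm
            have hσxK : σx ∈ W.cplx := hrx.mem_left
            have h1 : W.stp σx ≤ W.stp τ :=
              stp_mono hr.mem_right hm.2.1 (nonempty_of_mem_cplx hσxK)
            have h2 : W.stp σx = W.stp x := hrx.stp_left_eq_right
            have h4 := hImin x hx
            have h3 : W.stp x = W.stp σ := by omega
            rcases mem_pair_of_stp_eq hr (heK x hx) h3 with rfl | rfl
            · exact not_lower_and_upper hσlow ⟨σx, hrx⟩
            · exact hxτ rfl
          · rw [Vfs_eq_empty hxu, Finset.sum_empty]
      rw [Finset.sum_congr rfl hpt, Finset.sum_ite_eq' e τ (fun _ => (1 : ZMod 2))]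
    rw [hA, hB, add_zero] at h
    intro hmem
    rw [if_pos hmem] at h
    exact one_ne_zero h
  -- Step 2: σ ∉ e
  have hσe : σ ∉ e := by
    have h := coflow_eq hfix σ
    have hA : (∑ x ∈ e, ∑ t ∈ Vfs W x, coef (cobd W.cplx t) σ) = 0 := by
      apply Finset.sum_eq_zero; intro x hx
      by_cases hxu : W.UpperRegular x
      · obtain ⟨σx, hrx⟩ := hxu
        rw [Vfs_eq_singleton hrx, Finset.sum_singleton]
        apply coef_eq_zero
        intro hm
        rw [mem_cobd_iff] at hm
        have hσxK : σx ∈ W.cplx := hrx.mem_left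
        have h1 : W.stp σx ≤ W.stp σ :=
          stp_mono hr.mem_left hm.2.1 (nonempty_of_mem_cplx hσxK)
        have h2 : W.stp σx = W.stp x := hrx.stp_left_eq_right
        have h4 := hImin x hx
        have h3 : W.stp x = W.stp σ := by omega
        rcases mem_pair_of_stp_eq hr (heK x hx) h3 with rfl | rfl
        · exact not_lower_and_upper hσlow ⟨σx, hrx⟩
        · exact hτe hx
      · rw [Vfs_eq_empty hxu, Finset.sum_empty]
    have hB : (∑ x ∈ e, ∑ s ∈ cobd W.cplx x, coef (Vfs W s) σ) =
        (if σ ∈ e then (1 : ZMod 2) else 0) := by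
      have hcoef : ∀ s, coef (Vfs W s) σ = if s = τ then (1 : ZMod 2) else 0 := by
        intro s
        by_cases hs : s = τ
        · subst hs; rw [if_pos rfl, coef_eq_one (mem_Vfs.2 hr)]
        · rw [if_neg hs]
          apply coef_eq_zero
          intro hm
          exact hs (hr.unique_right (mem_Vfs.1 hm)).symm
      have hpt : ∀ x ∈ e, (∑ s ∈ cobd W.cplx x, coef (Vfs W s) σ) =
          if x = σ then (1 : ZMod 2) else 0 := by
        intro x hx
        simp_rw [hcoef]
        rw [Finset.sum_ite_eq' (cobd W.cplx x) τ (fun _ => (1 : ZMod 2))]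
        by_cases hxσ : x = σ
        · subst hxσ; rw [if_pos hr.mem_cobd, if_pos rfl]
        · rw [if_neg hxσ, if_neg]
          intro hm
          rw [mem_cobd_iff] at hm
          have h1 : W.stp x ≤ W.stp τ :=
            stp_mono hr.mem_right hm.2.1 (nonempty_of_mem_cplx (heK x hx))
          have h4 := hImin x hx
          have h3 : W.stp x = W.stp σ := by omega
          rcases mem_pair_of_stp_eq hr (heK x hx) h3 with rfl | rfl
          · exact hxσ rfl
          · have := hm.2.2
            omega
      rw [Finset.sum_congr rfl hpt, Finset.sum_ite_eq' e σ (fun _ => (1 : ZMod 2))]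
    rw [hA, hB, zero_add] at h
    intro hmem
    rw [if_pos hmem] at h
    exact one_ne_zero h
  rcases hν₀ with rfl | rfl
  · exact hσe hν₀e
  · exact hτe hν₀e

end MorseSeq

/-! ## Linearity and assembly lemmas -/

namespace MorseSeq

variable {W : MorseSeq V}

lemma sum_symmDiff (a b : Finset (Finset V)) (g : Finset V → ZMod 2) :
    ∑ x ∈ symmDiff a b, g x = ∑ x ∈ a, g x + ∑ x ∈ b, g x := by
  classical
  have hsub : symmDiff a b ⊆ a ∪ b := by
    intro x hx
    rw [Finset.mem_symmDiff] at hx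
    rw [Finset.mem_union]
    tauto
  rw [sum_coef hsub g]
  have ha : ∑ x ∈ a, g x = ∑ x ∈ a ∪ b, coef a x * g x :=
    sum_coef Finset.subset_union_left g
  have hb : ∑ x ∈ b, g x = ∑ x ∈ a ∪ b, coef b x * g x :=
    sum_coef Finset.subset_union_right g
  rw [ha, hb, ← Finset.sum_add_distrib]
  apply Finset.sum_congr rfl
  intro x _
  rw [coef_symmDiff, add_mul]

lemma Phi_symmDiff (a b : Finset (Finset V)) :
    Phi W (symmDiff a b) = symmDiff (Phi W a) (Phi W b) := by
  apply chain_ext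
  intro ν
  rw [coef_symmDiff, coef_Phi, coef_Phi, coef_Phi, sum_symmDiff]

lemma PhiStar_symmDiff (a b : Finset (Finset V)) :
    PhiStar W (symmDiff a b) = symmDiff (PhiStar W a) (PhiStar W b) := by
  apply chain_ext
  intro ν
  rw [coef_symmDiff, coef_PhiStar, coef_PhiStar, coef_PhiStar, sum_symmDiff]

lemma Phi_fixed_chainSum {d : Finset (Finset V)} {f : Finset V → Finset (Finset V)}
    (h : ∀ σ ∈ d, Phi W (f σ) = f σ) : Phi W (chainSum d f) = chainSum d f := by
  apply chain_ext
  intro ν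
  rw [coef_Phi, sum_chainSum, coef_chainSum]
  apply Finset.sum_congr rfl
  intro σ hσ
  rw [← coef_Phi, h σ hσ]

lemma PhiStar_fixed_chainSum {d : Finset (Finset V)} {f : Finset V → Finset (Finset V)}
    (h : ∀ σ ∈ d, PhiStar W (f σ) = f σ) : PhiStar W (chainSum d f) = chainSum d f := by
  apply chain_ext
  intro ν
  rw [coef_PhiStar, sum_chainSum, coef_chainSum]
  apply Finset.sum_congr rfl
  intro σ hσ
  rw [← coef_PhiStar, h σ hσ]

lemma mem_chainSum_exists {c : Finset (Finset V)} {f : Finset V → Finset (Finset V)}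
    {ν : Finset V} (h : ν ∈ chainSum c f) : ∃ σ ∈ c, ν ∈ f σ := by
  have := (Finset.mem_filter.1 h).1
  exact Finset.mem_biUnion.1 this

lemma coef_ext_crit {Vee : Finset V → Finset (Finset V)} {ν : Finset V}
    (hνK : ν ∈ W.cplx) (hsingle : Vee ν = {ν}) (d : Finset (Finset V)) :
    coef (chainSum d (extMap W Vee)) ν = coef d ν := by
  rw [coef_chainSum]
  have hpt : ∀ κ ∈ d, coef (extMap W Vee κ) ν = if κ = ν then (1 : ZMod 2) else 0 := by
    intro κ _
    by_cases h : κ = ν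
    · subst h
      rw [if_pos rfl]
      apply coef_eq_one
      unfold extMap
      rw [Finset.mem_filter, hsingle]
      exact ⟨hνK, Finset.mem_singleton_self κ⟩
    · rw [if_neg h]
      apply coef_eq_zero
      unfold extMap
      rw [Finset.mem_filter, hsingle, Finset.mem_singleton]
      rintro ⟨-, rfl⟩
      exact h rfl
  rw [Finset.sum_congr rfl hpt, Finset.sum_ite_eq' d ν (fun _ => (1 : ZMod 2))]
  unfold coef
  rfl

lemma coef_coext_crit {Λ : Finset V → Finset (Finset V)} {ν : Finset V}
    (hνK : ν ∈ W.cplx) (hsingle : Λ ν = {ν}) (d : Finset (Finset V)) :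
    coef (chainSum d (coextMap W Λ)) ν = coef d ν := by
  rw [coef_chainSum]
  have hpt : ∀ κ ∈ d, coef (coextMap W Λ κ) ν = if κ = ν then (1 : ZMod 2) else 0 := by
    intro κ _
    by_cases h : κ = ν
    · subst h
      rw [if_pos rfl]
      apply coef_eq_one
      unfold coextMap
      rw [Finset.mem_filter, hsingle]
      exact ⟨hνK, Finset.mem_singleton_self κ⟩
    · rw [if_neg h]
      apply coef_eq_zero
      unfold coextMap
      rw [Finset.mem_filter, hsingle, Finset.mem_singleton]
      rintro ⟨-, rfl⟩
      exact h rfl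
  rw [Finset.sum_congr rfl hpt, Finset.sum_ite_eq' d ν (fun _ => (1 : ZMod 2))]
  unfold coef
  rfl

end MorseSeq

/-! ## Main theorem -/

theorem image_of_extension_eq_fixed_chains_of_flow_aux (W : MorseSeq V)
    (Λ Vee : Finset V → Finset (Finset V))
    (hΛ : IsRefMap W Λ) (hV : IsCorefMap W Vee)
    (p : ℕ) (c : Finset (Finset V)) :
    ((∃ d, IsCritChain W p d ∧ chainSum d (extMap W Vee) = c) ↔
      (IsChainOf W.cplx p c ∧
        ∃ i, (Phi W)^[i + 1] c = (Phi W)^[i] c ∧ (Phi W)^[i] c = c)) ∧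
    ((∃ d, IsCritChain W p d ∧ chainSum d (coextMap W Λ) = c) ↔
      (IsChainOf W.cplx p c ∧
        ∃ j, (PhiStar W)^[j + 1] c = (PhiStar W)^[j] c ∧ (PhiStar W)^[j] c = c)) := by
  classical
  constructor
  · -- extension map / flow
    have hiter : (∃ i, (Phi W)^[i + 1] c = (Phi W)^[i] c ∧ (Phi W)^[i] c = c) ↔
        Phi W c = c := by
      constructor
      · rintro ⟨i, h1, h2⟩
        calc Phi W c = Phi W ((Phi W)^[i] c) := by rw [h2]
          _ = (Phi W)^[i + 1] c := (Function.iterate_succ_apply' (Phi W) i c).symm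
          _ = (Phi W)^[i] c := h1
          _ = c := h2
      · intro h
        exact ⟨0, by simpa using h, rfl⟩
    rw [hiter]
    constructor
    · rintro ⟨d, hd, rfl⟩
      constructor
      · intro ν hν
        obtain ⟨κ, hκd, hνκ⟩ := MorseSeq.mem_chainSum_exists hν
        unfold extMap at hνκ
        rw [Finset.mem_filter] at hνκ
        obtain ⟨hνK, hκV⟩ := hνκ
        have hfr := (hV.1 ν hνK κ hκV).2
        have hcard := (hd κ hκd).2
        exact ⟨hνK, by omega⟩
      · exact MorseSeq.Phi_fixed_chainSum (fun κ _ => MorseSeq.ext_fixed hV κ)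
    · rintro ⟨hchain, hfix⟩
      set d := c.filter (fun ν => W.Critical ν) with hdd
      have hdcrit : IsCritChain W p d := by
        intro ν hν
        rw [hdd, Finset.mem_filter] at hν
        exact ⟨hν.2, (hchain ν hν.1).2⟩
      refine ⟨d, hdcrit, ?_⟩
      set m := chainSum d (extMap W Vee) with hm
      have hmK : ∀ ν ∈ m, ν ∈ W.cplx := by
        intro ν hν
        obtain ⟨κ, hκd, hνκ⟩ := MorseSeq.mem_chainSum_exists hν
        exact (Finset.mem_filter.1 hνκ).1
      have hmfix : Phi W m = m :=
        MorseSeq.Phi_fixed_chainSum (fun κ _ => MorseSeq.ext_fixed hV κ)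
      set e := symmDiff c m with he
      have hefix : Phi W e = e := by rw [he, MorseSeq.Phi_symmDiff, hfix, hmfix]
      have heK : ∀ ν ∈ e, ν ∈ W.cplx := by
        intro ν hν
        rw [he, Finset.mem_symmDiff] at hν
        rcases hν with ⟨h1, _⟩ | ⟨h1, _⟩
        · exact (hchain ν h1).1
        · exact hmK ν h1
      have hecrit : ∀ ν ∈ e, ¬ W.Critical ν := by
        intro ν hν hcrit
        have hK : ν ∈ W.cplx := heK ν hν
        have h1 : coef m ν = coef d ν := MorseSeq.coef_ext_crit hK (hV.2.1 ν hcrit) d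
        have h2 : coef d ν = coef c ν := by
          unfold coef
          rw [hdd]
          by_cases h : ν ∈ c <;> simp [Finset.mem_filter, h, hcrit]
        have h3 : coef e ν = 0 := by
          rw [he, coef_symmDiff, h1, h2]
          exact CharTwo.add_self_eq_zero _
        rw [coef_eq_one hν] at h3
        exact one_ne_zero h3
      have hvan := MorseSeq.vanish heK hecrit hefix
      rw [he] at hvan
      exact (symmDiff_eq_right_of_empty hvan).symm
  · -- coextension map / coflow
    have hiter : (∃ j, (PhiStar W)^[j + 1] c = (PhiStar W)^[j] c ∧ (PhiStar W)^[j] c = c) ↔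
        PhiStar W c = c := by
      constructor
      · rintro ⟨j, h1, h2⟩
        calc PhiStar W c = PhiStar W ((PhiStar W)^[j] c) := by rw [h2]
          _ = (PhiStar W)^[j + 1] c := (Function.iterate_succ_apply' (PhiStar W) j c).symm
          _ = (PhiStar W)^[j] c := h1
          _ = c := h2
      · intro h
        exact ⟨0, by simpa using h, rfl⟩
    rw [hiter]
    constructor
    · rintro ⟨d, hd, rfl⟩
      constructor
      · intro ν hν
        obtain ⟨κ, hκd, hνκ⟩ := MorseSeq.mem_chainSum_exists hν
        unfold coextMap at hνκ
        rw [Finset.mem_filter] at hνκ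
        obtain ⟨hνK, hκV⟩ := hνκ
        have hfr := (hΛ.1 ν hνK κ hκV).2
        have hcard := (hd κ hκd).2
        exact ⟨hνK, by omega⟩
      · exact MorseSeq.PhiStar_fixed_chainSum (fun κ _ => MorseSeq.coext_fixed hΛ κ)
    · rintro ⟨hchain, hfix⟩
      set d := c.filter (fun ν => W.Critical ν) with hdd
      have hdcrit : IsCritChain W p d := by
        intro ν hν
        rw [hdd, Finset.mem_filter] at hν
        exact ⟨hν.2, (hchain ν hν.1).2⟩
      refine ⟨d, hdcrit, ?_⟩
      set m := chainSum d (coextMap W Λ) with hm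
      have hmK : ∀ ν ∈ m, ν ∈ W.cplx := by
        intro ν hν
        obtain ⟨κ, hκd, hνκ⟩ := MorseSeq.mem_chainSum_exists hν
        exact (Finset.mem_filter.1 hνκ).1
      have hmfix : PhiStar W m = m :=
        MorseSeq.PhiStar_fixed_chainSum (fun κ _ => MorseSeq.coext_fixed hΛ κ)
      set e := symmDiff c m with he
      have hefix : PhiStar W e = e := by rw [he, MorseSeq.PhiStar_symmDiff, hfix, hmfix]
      have heK : ∀ ν ∈ e, ν ∈ W.cplx := by
        intro ν hν
        rw [he, Finset.mem_symmDiff] at hν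
        rcases hν with ⟨h1, _⟩ | ⟨h1, _⟩
        · exact (hchain ν h1).1
        · exact hmK ν h1
      have hecrit : ∀ ν ∈ e, ¬ W.Critical ν := by
        intro ν hν hcrit
        have hK : ν ∈ W.cplx := heK ν hν
        have h1 : coef m ν = coef d ν := MorseSeq.coef_coext_crit hK (hΛ.2.1 ν hcrit) d
        have h2 : coef d ν = coef c ν := by
          unfold coef
          rw [hdd]
          by_cases h : ν ∈ c <;> simp [Finset.mem_filter, h, hcrit]
        have h3 : coef e ν = 0 := by
          rw [he, coef_symmDiff, h1, h2]
          exact CharTwo.add_self_eq_zero _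
        rw [coef_eq_one hν] at h3
        exact one_ne_zero h3
      have hvan := MorseSeq.vanish_star heK hecrit hefix
      rw [he] at hvan
      exact (symmDiff_eq_right_of_empty hvan).symm

/-- The image `Ō[p]` of the extension map `∧̃_p` equals the set of
`p`-chains of `K` fixed by the stabilized flow `Φ̄`, and the image of the coextension map
`∨̃_p` equals the set of `p`-chains fixed by the stabilized coflow. -/
theorem image_of_extension_eq_fixed_chains_of_flow (W : MorseSeq V)
    (Λ Vee : Finset V → Finset (Finset V))
    (hΛ : IsRefMap W Λ) (hV : IsCorefMap W Vee)
    (p : ℕ) (c : Finset (Finset V)) :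
    ((∃ d, IsCritChain W p d ∧ chainSum d (extMap W Vee) = c) ↔
      (IsChainOf W.cplx p c ∧
        ∃ i, (Phi W)^[i + 1] c = (Phi W)^[i] c ∧ (Phi W)^[i] c = c)) ∧
    ((∃ d, IsCritChain W p d ∧ chainSum d (coextMap W Λ) = c) ↔
      (IsChainOf W.cplx p c ∧
        ∃ j, (PhiStar W)^[j + 1] c = (PhiStar W)^[j] c ∧ (PhiStar W)^[j] c = c)) :=
  image_of_extension_eq_fixed_chains_of_flow_aux W Λ Vee hΛ hV p c
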